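/- arXiv:1205.3782 — 2 statements merged into one kernel-verified Lean document; each statement's English description precedes it below -/
import Mathlib

section
/- Let H be a bounded self-adjoint operator on a Hilbert space, let P be an orthogonal projection, set H̃ = PHP, and let Φ be a unit vector such that (1−P)H^n Φ = 0 for all n = 0, 1, ..., N₀−1. Then ‖e^{−itH̃}Φ − e^{−itH}Φ‖ ≤ 2·(e‖H‖t/N₀)^{N₀} for all t ≥ 0. -/
/-!
Since `P` fixes `Hⁿ Φ` for `n < N₀`, the vectors `H̃ⁿ Φ` and `Hⁿ Φ` agree for `n < N₀`, so the
two exponential series applied to `Φ` differ only in their tails from `N₀` on. As `‖H̃‖ ≤ ‖H‖`,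
each tail is bounded by `∑_{n ≥ N₀} xⁿ / n!` with `x = ‖H‖ t`. When `e x / N₀ < 1`, comparison
with a geometric series of ratio `x / N₀ ≤ 1 / 2` and Stirling's bound `N! ≥ √(2πN) (N / e)^N`
bound this by `(e x / N₀)^N₀`. Otherwise the claim is the trivial bound `2` coming from
unitarity of both evolutions.
-/

open scoped Nat

open NormedSpace Finset

section Tail

theorem pow_add_div_factorial_le_geometric {x : ℝ} (hx : 0 ≤ x) {N : ℕ} (hN : 0 < N) (n : ℕ) :
    x ^ (n + N) / (n + N)! ≤ x ^ N / N ! * (x / N) ^ n := by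
  have hfac : (N ! * N ^ n : ℝ) ≤ (n + N)! := by
    have := (Nat.mul_le_mul_left N ! (Nat.pow_le_pow_left N.le_succ n)).trans
      (Nat.factorial_mul_pow_le_factorial (m := N) (n := n))
    rw [add_comm n N]
    exact_mod_cast this
  calc x ^ (n + N) / (n + N)! ≤ x ^ (n + N) / (N ! * N ^ n) := by gcongr
    _ = x ^ N / N ! * (x / N) ^ n := by rw [pow_add, div_pow]; field_simp

theorem tsum_pow_add_div_factorial_le {x : ℝ} {N : ℕ} (hx : 0 ≤ x) (hxN : x < N) :
    ∑' n, x ^ (n + N) / (n + N)! ≤ x ^ N / N ! * (1 - x / N)⁻¹ := by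
  have hN : (0 : ℝ) < N := hx.trans_lt hxN
  have hgeom := (hasSum_geometric_of_lt_one (by positivity) ((div_lt_one hN).mpr hxN)).mul_left
    (x ^ N / N !)
  exact hasSum_le (pow_add_div_factorial_le_geometric hx (mod_cast hN))
    ((summable_nat_add_iff N).mpr (Real.summable_pow_div_factorial x)).hasSum hgeom

theorem sqrt_mul_pow_div_factorial_le {x : ℝ} (hx : 0 ≤ x) (N : ℕ) :
    √(2 * Real.pi * N) * (x ^ N / N !) ≤ (Real.exp 1 * x / N) ^ N := by
  rcases N.eq_zero_or_pos with rfl | hN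
  · simp
  rw [mul_div_assoc', div_le_iff₀ (by positivity)]
  calc √(2 * Real.pi * N) * x ^ N
      = (Real.exp 1 * x / N) ^ N * (√(2 * Real.pi * N) * (N / Real.exp 1) ^ N) := by
        rw [div_pow, mul_pow, div_pow]; field_simp
    _ ≤ (Real.exp 1 * x / N) ^ N * N ! := by gcongr; exact Stirling.le_factorial_stirling N

theorem tsum_pow_add_div_factorial_le_pow {x : ℝ} {N : ℕ} (hx : 0 ≤ x) (hN : N ≠ 0)
    (hxN : Real.exp 1 * x / N < 1) :
    ∑' n, x ^ (n + N) / (n + N)! ≤ (Real.exp 1 * x / N) ^ N := by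
  have hN1 : (1 : ℝ) ≤ N := mod_cast Nat.one_le_iff_ne_zero.mpr hN
  have he : (2 : ℝ) < Real.exp 1 := by have := Real.exp_one_gt_d9; linarith
  have hq : x / N ≤ 1 / 2 := by
    rw [div_lt_one (by positivity)] at hxN
    rw [div_le_iff₀ (by positivity)]; nlinarith
  have hsqrt : 2 ≤ √(2 * Real.pi * N) := by
    rw [Real.le_sqrt (by norm_num) (by positivity)]; nlinarith [Real.pi_gt_three]
  calc ∑' n, x ^ (n + N) / (n + N)! ≤ x ^ N / N ! * (1 - x / N)⁻¹ :=
        tsum_pow_add_div_factorial_le hx (by linarith [(div_le_iff₀ (by positivity)).mp hq])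
    _ ≤ x ^ N / N ! * 2 := by
        gcongr; rw [inv_le_comm₀ (by linarith) (by norm_num)]; linarith
    _ ≤ √(2 * Real.pi * N) * (x ^ N / N !) := by rw [mul_comm]; gcongr
    _ ≤ (Real.exp 1 * x / N) ^ N := sqrt_mul_pow_div_factorial_le hx N

end Tail

section Exponential

variable {𝕜 E : Type*} [RCLike 𝕜] [NormedAddCommGroup E] [NormedSpace 𝕜 E]

theorem ContinuousLinearMap.norm_pow_apply_le {T : E →L[𝕜] E} {r : ℝ} (hT : ‖T‖ ≤ r) (v : E)
    (n : ℕ) : ‖(T ^ n) v‖ ≤ r ^ n * ‖v‖ := by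
  induction n with
  | zero => simp
  | succ n ih =>
    rw [pow_succ', mul_apply_eq_comp, pow_succ', mul_assoc]
    exact (T.le_opNorm _).trans (mul_le_mul hT ih (norm_nonneg _) ((norm_nonneg _).trans hT))

variable [CompleteSpace E]

theorem hasSum_exp_apply (T : E →L[𝕜] E) (v : E) :
    HasSum (fun n => (n !⁻¹ : 𝕜) • (T ^ n) v) (exp T v) :=
  ((ContinuousLinearMap.apply 𝕜 E v).hasSum (exp_series_hasSum_exp' (𝕂 := 𝕜) T)).congr_fun
    fun _ => rfl

theorem norm_exp_apply_sub_sum_le {T : E →L[𝕜] E} {r : ℝ} (hT : ‖T‖ ≤ r) (v : E) (N : ℕ) :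
    ‖exp T v - ∑ n ∈ range N, (n !⁻¹ : 𝕜) • (T ^ n) v‖ ≤
      (∑' n, r ^ (n + N) / (n + N)!) * ‖v‖ := by
  refine ((hasSum_nat_add_iff' N).mpr (hasSum_exp_apply T v)).norm_le_of_bounded
    (((summable_nat_add_iff N).mpr (Real.summable_pow_div_factorial r)).hasSum.mul_right ‖v‖)
    fun n => ?_
  rw [norm_smul, norm_inv, RCLike.norm_natCast, inv_mul_eq_div, div_mul_eq_mul_div]
  gcongr
  exact T.norm_pow_apply_le hT v _

theorem norm_exp_apply_sub_exp_apply_le {S T : E →L[𝕜] E} {r : ℝ} (hS : ‖S‖ ≤ r) (hT : ‖T‖ ≤ r)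
    {v : E} {N : ℕ} (hST : ∀ n < N, (S ^ n) v = (T ^ n) v) :
    ‖exp S v - exp T v‖ ≤ 2 * (∑' n, r ^ (n + N) / (n + N)!) * ‖v‖ := by
  have hsum : ∑ n ∈ range N, (n !⁻¹ : 𝕜) • (S ^ n) v = ∑ n ∈ range N, (n !⁻¹ : 𝕜) • (T ^ n) v :=
    sum_congr rfl fun n hn => by rw [hST n (mem_range.mp hn)]
  calc ‖exp S v - exp T v‖
      = ‖(exp S v - ∑ n ∈ range N, (n !⁻¹ : 𝕜) • (S ^ n) v) -
          (exp T v - ∑ n ∈ range N, (n !⁻¹ : 𝕜) • (T ^ n) v)‖ := by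
        rw [hsum, sub_sub_sub_cancel_right]
    _ ≤ _ := norm_sub_le _ _
    _ ≤ _ := add_le_add (norm_exp_apply_sub_sum_le hS v N) (norm_exp_apply_sub_sum_le hT v N)
    _ = _ := by ring

end Exponential

theorem norm_exp_apply_of_mem_skewAdjoint {E : Type*} [NormedAddCommGroup E]
    [InnerProductSpace ℂ E] [CompleteSpace E] {T : E →L[ℂ] E} (hT : T ∈ skewAdjoint (E →L[ℂ] E))
    (v : E) : ‖exp T v‖ = ‖v‖ := by
  let +nondep : NormedAlgebra ℚ (E →L[ℂ] E) := .restrictScalars ℚ ℂ (E →L[ℂ] E)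
  have hunitary := exp_mem_unitary_of_mem_skewAdjoint hT
  exact ContinuousLinearMap.norm_map_of_mem_unitary hunitary v

theorem IsStarProjection.norm_mul_mul_le {R : Type*} [NonUnitalNormedRing R] [StarRing R]
    [CStarRing R] {p : R} (hp : IsStarProjection p) (a : R) : ‖p * a * p‖ ≤ ‖a‖ :=
  calc ‖p * a * p‖ ≤ ‖p‖ * ‖a‖ * ‖p‖ := norm_mul₃_le
    _ ≤ 1 * ‖a‖ * 1 := by gcongr <;> exact hp.norm_le
    _ = ‖a‖ := by ring

theorem ContinuousLinearMap.comp_comp_pow_apply_eq_pow_apply {R M : Type*} [Semiring R]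
    [TopologicalSpace M] [AddCommMonoid M] [Module R M] {P A : M →L[R] M} {v : M} {N : ℕ}
    (hPA : ∀ n < N, P ((A ^ n) v) = (A ^ n) v) :
    ∀ n < N, ((P ∘L A ∘L P) ^ n) v = (A ^ n) v := by
  intro n hn
  induction n with
  | zero => rfl
  | succ n ih =>
    rw [pow_succ', mul_apply_eq_comp, ih (by omega), comp_apply, comp_apply, hPA n (by omega),
      ← mul_apply_eq_comp A, ← pow_succ', hPA (n + 1) hn]

theorem truncated_evolution_bound_general {E : Type*} [NormedAddCommGroup E]
    [InnerProductSpace ℂ E] [CompleteSpace E]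
    (A P : E →L[ℂ] E) (hA : IsSelfAdjoint A)
    (hPidem : IsIdempotentElem P) (hPsa : IsSelfAdjoint P)
    (Φ : E) (hΦ : ‖Φ‖ = 1) (N₀ : ℕ)
    (hK : ∀ n < N₀, ((1 - P) ∘L A ^ n) Φ = 0)
    (t : ℝ) (ht : 0 ≤ t) :
    ‖NormedSpace.exp ((-(t : ℂ) * Complex.I) • (P ∘L A ∘L P)) Φ -
        NormedSpace.exp ((-(t : ℂ) * Complex.I) • A) Φ‖ ≤
      2 * (Real.exp 1 * ‖A‖ * t / N₀) ^ N₀ := by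
  set c : ℂ := -(t : ℂ) * Complex.I
  have hc : c ∈ skewAdjoint ℂ := by simp [c, skewAdjoint.mem_iff]
  have hP : IsStarProjection P := ⟨hPidem, hPsa⟩
  have hPAP : IsSelfAdjoint (P ∘L A ∘L P) := hA.conjugate_self hPsa
  rcases le_or_gt 1 ((Real.exp 1 * ‖A‖ * t / N₀) ^ N₀) with hr | hr
  · calc _ ≤ ‖exp (c • (P ∘L A ∘L P)) Φ‖ + ‖exp (c • A) Φ‖ := norm_sub_le _ _
      _ = 2 := by
        rw [norm_exp_apply_of_mem_skewAdjoint (hPAP.smul_mem_skewAdjoint hc),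
          norm_exp_apply_of_mem_skewAdjoint (hA.smul_mem_skewAdjoint hc), hΦ, one_add_one_eq_two]
      _ ≤ _ := by linarith
  have hN : N₀ ≠ 0 := by rintro rfl; simp at hr
  have hc_norm : ‖c‖ = t := by simp [c, abs_of_nonneg ht]
  have hpow : ∀ n < N₀, ((c • (P ∘L A ∘L P)) ^ n) Φ = ((c • A) ^ n) Φ := by
    have hPA : ∀ n < N₀, P ((A ^ n) Φ) = (A ^ n) Φ := fun n hn =>
      (sub_eq_zero.mp (hK n hn)).symm
    intro n hn
    simp only [smul_pow, smul_apply, ContinuousLinearMap.comp_comp_pow_apply_eq_pow_apply hPA n hn]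
  have hnorm_PAP : ‖c • (P ∘L A ∘L P)‖ ≤ ‖A‖ * t := by
    rw [norm_smul, hc_norm, mul_comm]; gcongr; exact hP.norm_mul_mul_le A
  have hnorm_A : ‖c • A‖ ≤ ‖A‖ * t := by rw [norm_smul, hc_norm, mul_comm]
  calc _ ≤ 2 * (∑' n, (‖A‖ * t) ^ (n + N₀) / (n + N₀)!) * ‖Φ‖ :=
        norm_exp_apply_sub_exp_apply_le hnorm_PAP hnorm_A hpow
    _ ≤ 2 * (Real.exp 1 * ‖A‖ * t / N₀) ^ N₀ := by
        rw [hΦ, mul_one, mul_assoc (Real.exp 1)]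
        gcongr
        exact tsum_pow_add_div_factorial_le_pow (by positivity) hN
          ((pow_lt_one_iff_of_nonneg (by positivity) hN).mp (by rwa [← mul_assoc]))

/-- Proposition 1 of the paper: if `H^n Φ` stays in the range of the projection `P` for all
`n < N₀`, then evolution under `H̃ = P H P` agrees with evolution under `H` up to
`2 (e ‖H‖ t / N₀)^N₀`. -/
theorem truncated_evolution_bound {E : Type*} [NormedAddCommGroup E]
    [InnerProductSpace ℂ E] [CompleteSpace E]
    (A P : E →L[ℂ] E) (hA : IsSelfAdjoint A)
    (hPidem : IsIdempotentElem P) (hPsa : IsSelfAdjoint P)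
    (Φ : E) (hΦ : ‖Φ‖ = 1) (N₀ : ℕ) (hN₀ : 1 ≤ N₀)
    (hK : ∀ n < N₀, ((1 - P) ∘L A ^ n) Φ = 0)
    (t : ℝ) (ht : 0 ≤ t) :
    ‖NormedSpace.exp ((-(t : ℂ) * Complex.I) • (P ∘L A ∘L P)) Φ -
        NormedSpace.exp ((-(t : ℂ) * Complex.I) • A) Φ‖ ≤
      2 * (Real.exp 1 * ‖A‖ * t / N₀) ^ N₀ :=
  truncated_evolution_bound_general A P hA hPidem hPsa Φ hΦ N₀ hK t ht
end

section
/- (Truncation Lemma) Let H be a bounded self-adjoint operator on a Hilbert space H, P an orthogonal projection with H̃ = PHP, and Φ a unit vector. Suppose for some T > 0, W ∈ {H, H̃}, N₀ ∈ ℕ, and δ > 0, one can write e^{−iWt}Φ = γ(t) + ε(t) for all 0 ≤ t ≤ T, where ‖ε(t)‖ ≤ δ and (1−P)H^r γ(t) = 0 for all r = 0,...,N₀−1. Then for all 0 ≤ t ≤ T, ‖(e^{−iHt} − e^{−iH̃t})Φ‖ ≤ (4e‖H‖t/N₀ + 2)(δ + 2^{−N₀}(1+δ)). -/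
/-!
Split `[0, t]` into `n ≤ 2e‖A‖t/N₀ + 1` steps of length `h` with `2e‖A‖h ≤ N₀`. Both evolutions
are unitary, so the error at time `t` is at most the sum of the one-step errors along the
`W`-trajectory. At each step the state is `γ + ε`: the `ε` part costs at most `2δ`, and on `γ` the
propagators `e^{-iAh}` and `e^{-iPAPh}` share their Taylor polynomial of degree `< N₀`, because
`(PAP)^k γ = A^k γ` for `k < N₀`. By Stirling's bound `k! ≥ 2 (k/e)^k`, each Taylor remainder is at
most `2^{-N₀} ‖γ‖`.
-/

open scoped Nat

theorem exists_nat_div_le_and_le_div_add_one {c N : ℝ} (hc : 0 ≤ c) (hN : 0 < N) :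
    ∃ n : ℕ, n ≠ 0 ∧ c / n ≤ N ∧ (n : ℝ) ≤ c / N + 1 := by
  refine ⟨⌊c / N⌋₊ + 1, Nat.succ_ne_zero _, ?_, ?_⟩
  · rw [div_le_iff₀ (by positivity), ← div_le_iff₀' hN]
    exact_mod_cast (Nat.lt_floor_add_one (c / N)).le
  · push_cast
    gcongr
    exact Nat.floor_le (by positivity)

theorem pow_div_factorial_le_half_pow {a : ℝ} (ha : 0 ≤ a) {k : ℕ} (hk : k ≠ 0)
    (hak : 2 * Real.exp 1 * a ≤ k) : a ^ k / k ! ≤ (1 / 2) ^ k / 2 := by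
  have hk : (1 : ℝ) ≤ k := by exact_mod_cast Nat.one_le_iff_ne_zero.mpr hk
  have hsqrt : 2 ≤ √(2 * Real.pi * k) :=
    Real.le_sqrt_of_sq_le (by nlinarith [Real.pi_gt_three])
  have hfac : 2 * (k / Real.exp 1) ^ k ≤ k ! :=
    (mul_le_mul_of_nonneg_right hsqrt (by positivity)).trans (Stirling.le_factorial_stirling k)
  have hpow : a ^ k ≤ (1 / 2) ^ k * (k / Real.exp 1) ^ k := by
    rw [← mul_pow]
    refine pow_le_pow_left₀ ha ?_ k
    rw [mul_div_assoc', le_div_iff₀ (Real.exp_pos 1)]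
    linarith
  calc a ^ k / k ! ≤ (1 / 2) ^ k * (k / Real.exp 1) ^ k / (2 * (k / Real.exp 1) ^ k) :=
        div_le_div₀ (by positivity) hpow (by positivity) hfac
    _ = (1 / 2) ^ k / 2 := by field_simp

theorem norm_exp_sub_sum_range_le_half_pow {𝕜 𝔸 : Type*} [RCLike 𝕜] [NormedRing 𝔸]
    [NormedAlgebra 𝕜 𝔸] [CompleteSpace 𝔸] {x : 𝔸} {N : ℕ} (hN : N ≠ 0)
    (hx : 2 * Real.exp 1 * ‖x‖ ≤ N) :
    ‖NormedSpace.exp x - ∑ k ∈ Finset.range N, (k !⁻¹ : 𝕜) • x ^ k‖ ≤ (1 / 2) ^ N := by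
  have htail : HasSum (fun j ↦ ((j + N) !⁻¹ : 𝕜) • x ^ (j + N))
      (NormedSpace.exp x - ∑ k ∈ Finset.range N, (k !⁻¹ : 𝕜) • x ^ k) :=
    (hasSum_nat_add_iff' N).mpr (NormedSpace.exp_series_hasSum_exp' (𝕂 := 𝕜) x)
  refine htail.norm_le_of_bounded (hasSum_geometric_two' _) fun j ↦ ?_
  have hjN : j + N ≠ 0 := by omega
  calc ‖((j + N) !⁻¹ : 𝕜) • x ^ (j + N)‖ ≤ ‖x‖ ^ (j + N) / (j + N) ! := by
        rw [norm_smul, norm_inv, RCLike.norm_natCast, inv_mul_eq_div]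
        gcongr
        exact norm_pow_le' x (Nat.pos_of_ne_zero hjN)
    _ ≤ (1 / 2) ^ (j + N) / 2 := by
        refine pow_div_factorial_le_half_pow (norm_nonneg x) hjN (hx.trans ?_)
        exact_mod_cast Nat.le_add_left N j
    _ = (1 / 2) ^ N / 2 / 2 ^ j := by rw [pow_add, one_div_pow 2 j]; ring

section Operators

variable {𝕜 E : Type*} [RCLike 𝕜] [NormedAddCommGroup E] [NormedSpace 𝕜 E]

theorem norm_pow_apply_sub_pow_apply_le {a b : E →L[𝕜] E} (hb : ∀ y, ‖b y‖ ≤ ‖y‖)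
    (x : E) (n : ℕ) :
    ‖(a ^ n) x - (b ^ n) x‖ ≤ ∑ j ∈ Finset.range n, ‖a ((a ^ j) x) - b ((a ^ j) x)‖ := by
  induction n with
  | zero => simp
  | succ n ih =>
    have hsplit : (a ^ (n + 1)) x - (b ^ (n + 1)) x
        = (a ((a ^ n) x) - b ((a ^ n) x)) + b ((a ^ n) x - (b ^ n) x) := by
      rw [pow_succ', pow_succ', mul_apply_eq_comp, mul_apply_eq_comp, map_sub]
      abel
    rw [hsplit, Finset.sum_range_succ, add_comm (∑ j ∈ Finset.range n, _)]
    exact (norm_add_le _ _).trans (add_le_add_right ((hb _).trans ih) _)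

theorem compression_pow_apply_eq {A P : E →L[𝕜] E} {v : E} {N : ℕ}
    (hv : ∀ r < N, P ((A ^ r) v) = (A ^ r) v) :
    ∀ k < N, ((P ∘L A ∘L P) ^ k) v = (A ^ k) v := by
  intro k hk
  induction k with
  | zero => simp
  | succ k ih =>
    calc ((P ∘L A ∘L P) ^ (k + 1)) v = P (A (P ((A ^ k) v))) := by
          rw [pow_succ', mul_apply_eq_comp, ih (by omega)]; rfl
      _ = P ((A ^ (k + 1)) v) := by rw [hv k (by omega), pow_succ', mul_apply_eq_comp]
      _ = (A ^ (k + 1)) v := hv (k + 1) hk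

variable [CompleteSpace E]

theorem norm_exp_apply_sub_exp_apply_le_s2 {x y : E →L[𝕜] E} {v : E} {N : ℕ} (hN : N ≠ 0)
    (hx : 2 * Real.exp 1 * ‖x‖ ≤ N) (hy : 2 * Real.exp 1 * ‖y‖ ≤ N)
    (hxy : ∀ k < N, (x ^ k) v = (y ^ k) v) :
    ‖NormedSpace.exp x v - NormedSpace.exp y v‖ ≤ 2 * (1 / 2) ^ N * ‖v‖ := by
  set p : (E →L[𝕜] E) → E →L[𝕜] E := fun z ↦ ∑ k ∈ Finset.range N, (k !⁻¹ : 𝕜) • z ^ k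
  have hp : p x v = p y v := by
    simp only [p, sum_apply, smul_apply]
    exact Finset.sum_congr rfl fun k hk ↦ by rw [hxy k (Finset.mem_range.mp hk)]
  have hrem : ∀ z : E →L[𝕜] E, 2 * Real.exp 1 * ‖z‖ ≤ N →
      ‖(NormedSpace.exp z - p z) v‖ ≤ (1 / 2) ^ N * ‖v‖ := fun z hz ↦
    (ContinuousLinearMap.le_opNorm _ _).trans
      (mul_le_mul_of_nonneg_right (norm_exp_sub_sum_range_le_half_pow hN hz) (norm_nonneg v))
  calc ‖NormedSpace.exp x v - NormedSpace.exp y v‖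
      = ‖(NormedSpace.exp x - p x) v - (NormedSpace.exp y - p y) v‖ := by
        rw [sub_apply, sub_apply, hp, sub_sub_sub_cancel_right]
    _ ≤ (1 / 2) ^ N * ‖v‖ + (1 / 2) ^ N * ‖v‖ :=
        (norm_sub_le _ _).trans (add_le_add (hrem x hx) (hrem y hy))
    _ = 2 * (1 / 2) ^ N * ‖v‖ := by ring

end Operators

section Compression

variable {𝕜 E : Type*} [RCLike 𝕜] [NormedAddCommGroup E] [InnerProductSpace 𝕜 E]
  [CompleteSpace E] {A P : E →L[𝕜] E}

theorem IsStarProjection.norm_compression_le (hP : IsStarProjection P) :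
    ‖P ∘L A ∘L P‖ ≤ ‖A‖ := by
  have hP1 : ‖P‖ ≤ 1 := hP.norm_le
  calc ‖P ∘L A ∘L P‖ ≤ ‖P‖ * (‖A‖ * ‖P‖) :=
        (P.opNorm_comp_le _).trans (mul_le_mul_of_nonneg_left (A.opNorm_comp_le P) (norm_nonneg P))
    _ ≤ 1 * (‖A‖ * 1) := by gcongr
    _ = ‖A‖ := by ring

theorem IsSelfAdjoint.compression (hA : IsSelfAdjoint A) (hP : IsSelfAdjoint P) :
    IsSelfAdjoint (P ∘L A ∘L P) := by
  have h := hA.conjugate P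
  rw [hP.star_eq] at h
  exact h

end Compression

section Propagator

variable {E : Type*} [NormedAddCommGroup E] [InnerProductSpace ℂ E] [CompleteSpace E]
  {A B : E →L[ℂ] E}

-- `E →L[ℂ] E` has no global `ℚ`-algebra instance, which the algebraic lemmas about `exp` need.
theorem IsSelfAdjoint.norm_exp_smul_apply (hB : IsSelfAdjoint B) (t : ℝ) (x : E) :
    ‖NormedSpace.exp ((-(t : ℂ) * Complex.I) • B) x‖ = ‖x‖ := by
  let _ : NormedAlgebra ℚ (E →L[ℂ] E) := NormedAlgebra.restrictScalars ℚ ℂ _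
  have hc : -(t : ℂ) * Complex.I ∈ skewAdjoint ℂ := skewAdjoint.mem_iff.mpr (by simp)
  have hu := NormedSpace.exp_mem_unitary_of_mem_skewAdjoint (hB.smul_mem_skewAdjoint hc)
  exact ContinuousLinearMap.norm_map_of_mem_unitary hu x

theorem exp_smul_natCast_mul (B : E →L[ℂ] E) (n : ℕ) (h : ℝ) :
    NormedSpace.exp ((-((n * h : ℝ) : ℂ) * Complex.I) • B) =
      NormedSpace.exp ((-(h : ℂ) * Complex.I) • B) ^ n := by
  let _ : NormedAlgebra ℚ (E →L[ℂ] E) := NormedAlgebra.restrictScalars ℚ ℂ _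
  rw [← NormedSpace.exp_nsmul, ← Nat.cast_smul_eq_nsmul ℂ, smul_smul]
  push_cast
  ring_nf

theorem norm_exp_smul_apply_sub_le_of_step (hB : IsSelfAdjoint B) (x : E) (n : ℕ) (h κ : ℝ)
    (hstep : ∀ j < n,
      ‖NormedSpace.exp ((-(h : ℂ) * Complex.I) • A)
          (NormedSpace.exp ((-((j * h : ℝ) : ℂ) * Complex.I) • A) x) -
        NormedSpace.exp ((-(h : ℂ) * Complex.I) • B)
          (NormedSpace.exp ((-((j * h : ℝ) : ℂ) * Complex.I) • A) x)‖ ≤ κ) :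
    ‖NormedSpace.exp ((-((n * h : ℝ) : ℂ) * Complex.I) • A) x -
        NormedSpace.exp ((-((n * h : ℝ) : ℂ) * Complex.I) • B) x‖ ≤ n * κ := by
  simp only [exp_smul_natCast_mul] at hstep ⊢
  calc _ ≤ _ := norm_pow_apply_sub_pow_apply_le (fun y ↦ (hB.norm_exp_smul_apply h y).le) x n
    _ ≤ ∑ _j ∈ Finset.range n, κ := Finset.sum_le_sum fun j hj ↦ hstep j (Finset.mem_range.mp hj)
    _ = n * κ := by simp

theorem norm_exp_smul_apply_sub_le_of_step_along (hA : IsSelfAdjoint A) (hB : IsSelfAdjoint B)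
    {W : E →L[ℂ] E} (hW : W = A ∨ W = B) (x : E) {t : ℝ} (ht : 0 ≤ t) {n : ℕ} (hn : n ≠ 0)
    {κ : ℝ}
    (hstep : ∀ s, 0 ≤ s → s ≤ t →
      ‖NormedSpace.exp ((-((t / n : ℝ) : ℂ) * Complex.I) • A)
          (NormedSpace.exp ((-(s : ℂ) * Complex.I) • W) x) -
        NormedSpace.exp ((-((t / n : ℝ) : ℂ) * Complex.I) • B)
          (NormedSpace.exp ((-(s : ℂ) * Complex.I) • W) x)‖ ≤ κ) :
    ‖NormedSpace.exp ((-(t : ℂ) * Complex.I) • A) x -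
        NormedSpace.exp ((-(t : ℂ) * Complex.I) • B) x‖ ≤ n * κ := by
  have hn0 : (0 : ℝ) < n := by positivity
  have hjt : ∀ j < n, 0 ≤ j * (t / n) ∧ j * (t / n) ≤ t := fun j hj ↦
    ⟨by positivity, (by gcongr : j * (t / n) ≤ n * (t / n)).trans_eq (mul_div_cancel₀ t hn0.ne')⟩
  rw [← mul_div_cancel₀ t hn0.ne']
  rcases hW with rfl | rfl
  · exact norm_exp_smul_apply_sub_le_of_step hB x n _ κ fun j hj ↦ hstep _ (hjt j hj).1 (hjt j hj).2
  · rw [norm_sub_rev]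
    refine norm_exp_smul_apply_sub_le_of_step hA x n _ κ fun j hj ↦ ?_
    rw [norm_sub_rev]
    exact hstep _ (hjt j hj).1 (hjt j hj).2

theorem norm_exp_smul_apply_sub_exp_compression_apply_le (hA : IsSelfAdjoint A)
    {P : E →L[ℂ] E} (hP : IsStarProjection P) {N : ℕ} (hN : N ≠ 0) {h : ℝ}
    (hh : 2 * Real.exp 1 * ‖A‖ * |h| ≤ N) {g e : E}
    (hg : ∀ r < N, ((1 - P) ∘L A ^ r) g = 0) :
    ‖NormedSpace.exp ((-(h : ℂ) * Complex.I) • A) (g + e) -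
        NormedSpace.exp ((-(h : ℂ) * Complex.I) • (P ∘L A ∘L P)) (g + e)‖ ≤
      2 * (1 / 2) ^ N * ‖g‖ + 2 * ‖e‖ := by
  have hPAP := hA.compression hP.isSelfAdjoint
  have hc : ‖-(h : ℂ) * Complex.I‖ = |h| := by simp
  have hgP : ∀ r < N, P ((A ^ r) g) = (A ^ r) g := fun r hr ↦ by
    have := hg r hr
    rw [ContinuousLinearMap.comp_apply, sub_apply, one_apply_eq_self, sub_eq_zero] at this
    exact this.symm
  have hgA : ‖NormedSpace.exp ((-(h : ℂ) * Complex.I) • A) g -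
      NormedSpace.exp ((-(h : ℂ) * Complex.I) • (P ∘L A ∘L P)) g‖ ≤ 2 * (1 / 2) ^ N * ‖g‖ := by
    refine norm_exp_apply_sub_exp_apply_le_s2 hN ?_ ?_ fun k hk ↦ ?_
    · rwa [norm_smul, hc, mul_comm |h|, ← mul_assoc]
    · rw [norm_smul, hc, mul_comm |h|, ← mul_assoc]
      exact hh.trans' (by gcongr; exact hP.norm_compression_le)
    · rw [smul_pow, smul_pow, smul_apply, smul_apply, compression_pow_apply_eq hgP k hk]
  calc _ = ‖(NormedSpace.exp ((-(h : ℂ) * Complex.I) • A) g -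
          NormedSpace.exp ((-(h : ℂ) * Complex.I) • (P ∘L A ∘L P)) g) +
        (NormedSpace.exp ((-(h : ℂ) * Complex.I) • A) e -
          NormedSpace.exp ((-(h : ℂ) * Complex.I) • (P ∘L A ∘L P)) e)‖ := by
        rw [map_add, map_add, add_sub_add_comm]
    _ ≤ 2 * (1 / 2) ^ N * ‖g‖ + (‖e‖ + ‖e‖) := by
        refine (norm_add_le _ _).trans (add_le_add hgA ((norm_sub_le _ _).trans_eq ?_))
        rw [hA.norm_exp_smul_apply, hPAP.norm_exp_smul_apply]
    _ = 2 * (1 / 2) ^ N * ‖g‖ + 2 * ‖e‖ := by ring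

end Propagator

theorem truncation_lemma_general {E : Type*} [NormedAddCommGroup E]
    [InnerProductSpace ℂ E] [CompleteSpace E]
    (A P : E →L[ℂ] E) (hA : IsSelfAdjoint A)
    (hPidem : IsIdempotentElem P) (hPsa : IsSelfAdjoint P)
    (Φ : E) (hΦ : ‖Φ‖ = 1)
    (T : ℝ) (W : E →L[ℂ] E)
    (hW : W = A ∨ W = P ∘L A ∘L P)
    (N₀ : ℕ) (δ : ℝ)
    (γ ε : ℝ → E)
    (hdecomp : ∀ t, 0 ≤ t → t ≤ T →
      NormedSpace.exp ((-(t : ℂ) * Complex.I) • W) Φ = γ t + ε t)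
    (hε : ∀ t, 0 ≤ t → t ≤ T → ‖ε t‖ ≤ δ)
    (hγ : ∀ t, 0 ≤ t → t ≤ T → ∀ r < N₀, ((1 - P) ∘L A ^ r) (γ t) = 0) :
    ∀ t, 0 ≤ t → t ≤ T →
      ‖NormedSpace.exp ((-(t : ℂ) * Complex.I) • A) Φ -
          NormedSpace.exp ((-(t : ℂ) * Complex.I) • (P ∘L A ∘L P)) Φ‖ ≤
        (4 * Real.exp 1 * ‖A‖ * t / N₀ + 2) * (δ + 2 ^ (-(N₀ : ℝ)) * (1 + δ)) := by
  intro t ht htT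
  have hδ : 0 ≤ δ := (norm_nonneg _).trans (hε t ht htT)
  have hPAP := hA.compression hPsa
  have hWsa : IsSelfAdjoint W := by rcases hW with rfl | rfl <;> assumption
  rw [Real.rpow_neg zero_le_two, Real.rpow_natCast, ← one_div, ← one_div_pow]
  rcases Nat.eq_zero_or_pos N₀ with rfl | hN₀
  · calc _ ≤ _ := norm_sub_le _ _
      _ = 2 := by rw [hA.norm_exp_smul_apply, hPAP.norm_exp_smul_apply, hΦ, one_add_one_eq_two]
      _ ≤ _ := by norm_num; linarith
  obtain ⟨n, hn, hlen, hn'⟩ := exists_nat_div_le_and_le_div_add_one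
    (by positivity : 0 ≤ 2 * Real.exp 1 * ‖A‖ * t) (by positivity : (0 : ℝ) < N₀)
  have key := norm_exp_smul_apply_sub_le_of_step_along hA hPAP hW Φ ht hn
      (κ := 2 * (1 / 2) ^ N₀ * (1 + δ) + 2 * δ) fun s hs0 hst ↦ by
    have hsT := hst.trans htT
    rw [hdecomp s hs0 hsT]
    refine (norm_exp_smul_apply_sub_exp_compression_apply_le hA ⟨hPidem, hPsa⟩ hN₀.ne'
      (by rwa [abs_of_nonneg (by positivity), ← mul_div_assoc]) (hγ s hs0 hsT)).trans ?_
    gcongr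
    · refine (norm_le_add_norm_add (γ s) (ε s)).trans ?_
      rw [← hdecomp s hs0 hsT, hWsa.norm_exp_smul_apply, hΦ]
      exact add_le_add_right (hε s hs0 hsT) 1
    · exact hε s hs0 hsT
  calc _ ≤ _ := key
    _ = 2 * n * (δ + (1 / 2) ^ N₀ * (1 + δ)) := by ring
    _ ≤ 2 * (2 * Real.exp 1 * ‖A‖ * t / N₀ + 1) * (δ + (1 / 2) ^ N₀ * (1 + δ)) := by gcongr
    _ = _ := by ring

/-- The Truncation Lemma. -/
theorem truncation_lemma {E : Type*} [NormedAddCommGroup E]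
    [InnerProductSpace ℂ E] [CompleteSpace E]
    (A P : E →L[ℂ] E) (hA : IsSelfAdjoint A)
    (hPidem : IsIdempotentElem P) (hPsa : IsSelfAdjoint P)
    (Φ : E) (hΦ : ‖Φ‖ = 1)
    (T : ℝ) (hT : 0 < T) (W : E →L[ℂ] E)
    (hW : W = A ∨ W = P ∘L A ∘L P)
    (N₀ : ℕ) (δ : ℝ) (hδ : 0 < δ)
    (γ ε : ℝ → E)
    (hdecomp : ∀ t, 0 ≤ t → t ≤ T →
      NormedSpace.exp ((-(t : ℂ) * Complex.I) • W) Φ = γ t + ε t)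
    (hε : ∀ t, 0 ≤ t → t ≤ T → ‖ε t‖ ≤ δ)
    (hγ : ∀ t, 0 ≤ t → t ≤ T → ∀ r < N₀, ((1 - P) ∘L A ^ r) (γ t) = 0) :
    ∀ t, 0 ≤ t → t ≤ T →
      ‖NormedSpace.exp ((-(t : ℂ) * Complex.I) • A) Φ -
          NormedSpace.exp ((-(t : ℂ) * Complex.I) • (P ∘L A ∘L P)) Φ‖ ≤
        (4 * Real.exp 1 * ‖A‖ * t / N₀ + 2) * (δ + 2 ^ (-(N₀ : ℝ)) * (1 + δ)) :=
  truncation_lemma_general A P hA hPidem hPsa Φ hΦ T W hW N₀ δ γ ε hdecomp hε hγ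
end
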